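/- arXiv:2201.07528 — 3 statements merged into one kernel-verified Lean document; each statement's English description precedes it below -/
import Mathlib

section
/- Let G be a finite subcubic class two graph. Then the critical subgraph K_G of G (the set of edges of G that are conflicting in some minimal colouring of G) equals the union of all representative conflicting subsets of G of minimal order, i.e. K_G = ⋃{ R : R is a representative conflicting subset of G with |R| minimal among all representative conflicting subsets of G }. -/
open SimpleGraph

variable {V : Type*}

/-- Two edges (of a graph) are adjacent if they are distinct and share a vertex. -/
def EdgesAdj (e₁ e₂ : Sym2 V) : Prop := e₁ ≠ e₂ ∧ ∃ v, v ∈ e₁ ∧ v ∈ e₂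

/-- `f` is a proper edge colouring of `G`: adjacent edges of `G` get distinct colours. -/
def IsProperEC (G : SimpleGraph V) {α : Type*} (f : Sym2 V → α) : Prop :=
  ∀ e₁ ∈ G.edgeSet, ∀ e₂ ∈ G.edgeSet, EdgesAdj e₁ e₂ → f e₁ ≠ f e₂

/-- `G` is 3-edge-colourable. -/
def ThreeEC (G : SimpleGraph V) : Prop := ∃ f : Sym2 V → Fin 3, IsProperEC G f

/-- The degree of a vertex. -/
noncomputable def deg (G : SimpleGraph V) (v : V) : ℕ := Nat.card (G.neighborSet v)

/-- Every vertex has degree at most 3. -/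
def Subcubic (G : SimpleGraph V) : Prop := ∀ v, deg G v ≤ 3

/-- Every vertex has degree exactly 3. -/
def CubicGraph (G : SimpleGraph V) : Prop := ∀ v, deg G v = 3

/-- The resistance of `G`: the minimum number of edges whose removal from `G`
yields a 3-edge-colourable graph. -/
noncomputable def resistance (G : SimpleGraph V) : ℕ :=
  sInf {n | ∃ R : Set (Sym2 V), R.ncard = n ∧ ThreeEC (G.deleteEdges R)}

/-- `M` is a minimal conflicting subgraph of `G`: a subgraph of `G` that is not
3-edge-colourable, but `M − e` is 3-edge-colourable for every edge `e` of `M`. -/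
def MinConfl (G M : SimpleGraph V) : Prop :=
  M ≤ G ∧ ¬ ThreeEC M ∧ ∀ e ∈ M.edgeSet, ThreeEC (M.deleteEdges {e})

/-- `R` is a representative conflicting subset of `G`: a set of edges of `G`
containing at least one edge from every minimal conflicting subgraph of `G`. -/
def RepConfl (G : SimpleGraph V) (R : Set (Sym2 V)) : Prop :=
  R ⊆ G.edgeSet ∧ ∀ M : SimpleGraph V, MinConfl G M → (R ∩ M.edgeSet).Nonempty

/-- A minimal colouring of `G`: a proper 4-edge-colouring (colour `0` playing the role
of the fourth colour) in which exactly `resistance G` edges of `G` receive colour `0`. -/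
def IsMinimalColoring (G : SimpleGraph V) (f : Sym2 V → Fin 4) : Prop :=
  IsProperEC G f ∧ {e | e ∈ G.edgeSet ∧ f e = 0}.ncard = resistance G

/-! `R` meets every minimal conflicting subgraph exactly when `G - R` is 3-edge-colourable, so
the representative conflicting subsets of minimum order are the sets of `r(G)` edges whose
deletion leaves a 3-edge-colourable graph, and the conflicting edges of a minimal colouring form
such a set. Conversely such a set `R` is a matching when `G` is subcubic: if `vu, vx ∈ R`, then
`v` keeps at most one edge, coloured `c` say, and `u`, `x` each miss some colour. If one of them
misses a colour other than `c`, its edge to `v` can be re-inserted, contradicting minimality.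
Otherwise both miss only `c`, and for `a ≠ c` each of `u`, `v`, `x` is the end of an
`a`/`c`-Kempe chain. A chain has only two ends, so `u` or `x` is not on the chain of `v`, and
swapping `a` and `c` on its chain lets its edge to `v` be re-inserted. Colouring `R` with `0` and
`G - R` with `1, 2, 3` then gives a minimal colouring.
-/

section Development

variable {α : Type*} {G H K : SimpleGraph V} {R : Set (Sym2 V)} {g : Sym2 V → α}

theorem ThreeEC.mono (hHG : H ≤ G) (hG : ThreeEC G) : ThreeEC H :=
  let ⟨f, hf⟩ := hG
  ⟨f, fun _ h₁ _ h₂ => hf _ (edgeSet_mono hHG h₁) _ (edgeSet_mono hHG h₂)⟩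

theorem ThreeEC.bot : ThreeEC (⊥ : SimpleGraph V) :=
  ⟨fun _ => 0, fun _ h => absurd h (by simp)⟩

theorem exists_minConfl_le [Finite V] (hH : ¬ ThreeEC H) : ∃ M ≤ H, MinConfl H M := by
  obtain ⟨M, hMH, hMmin⟩ := exists_minimal_le_of_wellFoundedLT (fun M => ¬ ThreeEC M) H hH
  refine ⟨M, hMH, hMH, hMmin.prop, fun e he => not_not.mp (hMmin.not_prop_of_lt ?_)⟩
  exact lt_of_le_of_ne (deleteEdges_le _) fun h =>
    Set.disjoint_singleton_right.1 (deleteEdges_eq_self.1 h) he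

theorem repConfl_iff_threeEC_deleteEdges [Finite V] (hR : R ⊆ G.edgeSet) :
    RepConfl G R ↔ ThreeEC (G.deleteEdges R) := by
  refine ⟨fun hRep => ?_, fun h3 => ⟨hR, fun M hM => ?_⟩⟩
  · by_contra h3
    obtain ⟨M, hMle, hM⟩ := exists_minConfl_le h3
    obtain ⟨e, heR, heM⟩ := hRep.2 M ⟨hMle.trans (deleteEdges_le R), hM.2⟩
    exact (edgeSet_deleteEdges R ▸ edgeSet_mono hMle heM).2 heR
  · by_contra hRM
    refine hM.2.1 (h3.mono fun y z hyz => (deleteEdges_adj ..).2 ⟨hM.1 hyz, fun hyzR => ?_⟩)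
    exact hRM ⟨_, hyzR, hyz⟩

theorem resistance_le (h : ThreeEC (G.deleteEdges R)) : resistance G ≤ R.ncard :=
  Nat.sInf_le ⟨R, rfl, h⟩

theorem exists_ncard_eq_resistance [Finite V] (G : SimpleGraph V) :
    ∃ R ⊆ G.edgeSet, R.ncard = resistance G ∧ ThreeEC (G.deleteEdges R) := by
  obtain ⟨R, hR, h3⟩ := Nat.sInf_mem (s := {n | ∃ R : Set (Sym2 V), R.ncard = n ∧
    ThreeEC (G.deleteEdges R)}) ⟨_, G.edgeSet, rfl, by simpa using ThreeEC.bot⟩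
  rw [deleteEdges_eq_inter_edgeSet] at h3
  refine ⟨R ∩ G.edgeSet, Set.inter_subset_right, le_antisymm ?_ (resistance_le h3), h3⟩
  exact (Set.ncard_le_ncard Set.inter_subset_left).trans_eq hR

theorem repConfl_minimal_iff [Finite V] :
    (RepConfl G R ∧ ∀ R', RepConfl G R' → R.ncard ≤ R'.ncard) ↔
      R ⊆ G.edgeSet ∧ ThreeEC (G.deleteEdges R) ∧ R.ncard = resistance G := by
  constructor
  · rintro ⟨hR, hle⟩
    have h3 := (repConfl_iff_threeEC_deleteEdges hR.1).1 hR
    obtain ⟨R₀, hR₀, hcard₀, h3₀⟩ := exists_ncard_eq_resistance G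
    refine ⟨hR.1, h3, le_antisymm ?_ (resistance_le h3)⟩
    exact hcard₀ ▸ hle R₀ ((repConfl_iff_threeEC_deleteEdges hR₀).2 h3₀)
  · rintro ⟨hRE, h3, hcard⟩
    refine ⟨(repConfl_iff_threeEC_deleteEdges hRE).2 h3, fun R' hR' => ?_⟩
    exact hcard ▸ resistance_le ((repConfl_iff_threeEC_deleteEdges hR'.1).1 hR')

theorem not_threeEC_deleteEdges_diff_singleton [Finite V] (hcard : R.ncard = resistance G)
    {e : Sym2 V} (he : e ∈ R) : ¬ ThreeEC (G.deleteEdges (R \ {e})) := fun h =>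
  (resistance_le h).not_gt (hcard ▸ Set.ncard_sdiff_singleton_lt_of_mem he)

theorem EdgesAdj.symm {e₁ e₂ : Sym2 V} (h : EdgesAdj e₁ e₂) : EdgesAdj e₂ e₁ :=
  ⟨h.1.symm, h.2.imp fun _ hv => hv.symm⟩

theorem IsProperEC.eq_of_apply_eq (hg : IsProperEC H g) {y z₁ z₂ : V} (h₁ : H.Adj y z₁)
    (h₂ : H.Adj y z₂) (h : g s(y, z₁) = g s(y, z₂)) : z₁ = z₂ := by
  by_contra hz
  exact hg _ h₁ _ h₂ ⟨Sym2.congr_right.not.2 hz, y, Sym2.mem_mk_left _ _, Sym2.mem_mk_left _ _⟩ h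

def IsMissing (H : SimpleGraph V) (g : Sym2 V → α) (v : V) (c : α) : Prop :=
  ∀ z, H.Adj v z → g s(v, z) ≠ c

theorem exists_isMissing [Finite V] [Finite α] {v : V} (g : Sym2 V → α)
    (h : (H.neighborSet v).ncard < Nat.card α) : ∃ c, IsMissing H g v c := by
  by_contra! hall
  refine h.not_ge ((Set.ncard_univ α).symm.trans_le
    ((Set.ncard_le_ncard fun c _ => ?_).trans (Set.ncard_image_le (f := fun z => g s(v, z)))))
  simpa [IsMissing] using hall c

theorem exists_forall_ne_isMissing [Nonempty α] {v : V} (g : Sym2 V → α)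
    (h : (H.neighborSet v).Subsingleton) : ∃ c, ∀ β ≠ c, IsMissing H g v β := by
  obtain hv | ⟨w, hw⟩ := h.eq_empty_or_singleton
  · exact ⟨Classical.arbitrary α, fun β _ z hz => (Set.eq_empty_iff_forall_notMem.1 hv z hz).elim⟩
  · refine ⟨g s(v, w), fun β hβ z hz => ?_⟩
    have hzw : z ∈ ({w} : Set V) := hw ▸ hz
    rw [Set.mem_singleton_iff.1 hzw]
    exact hβ.symm

theorem IsProperEC.update [DecidableEq V] (hg : IsProperEC H g) {u v : V} {c : α}
    (hGH : G.edgeSet ⊆ insert s(u, v) H.edgeSet) (hu : IsMissing H g u c)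
    (hv : IsMissing H g v c) : IsProperEC G (Function.update g s(u, v) c) := by
  have hH : ∀ d ∈ G.edgeSet, d ≠ s(u, v) → d ∈ H.edgeSet :=
    fun d hd hne => (hGH hd).resolve_left hne
  have hfree : ∀ d ∈ G.edgeSet, d ≠ s(u, v) → EdgesAdj d s(u, v) → g d ≠ c := by
    rintro d hd hne ⟨-, y, hyd, hy⟩
    obtain ⟨z, rfl⟩ := Sym2.mem_iff_exists.1 hyd
    rcases Sym2.mem_iff.1 hy with rfl | rfl
    · exact hu z (hH _ hd hne)
    · exact hv z (hH _ hd hne)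
  intro d₁ h₁ d₂ h₂ hadj
  by_cases e₁ : d₁ = s(u, v) <;> by_cases e₂ : d₂ = s(u, v)
  · exact absurd (e₁.trans e₂.symm) hadj.1
  · subst e₁
    rw [Function.update_self, Function.update_of_ne e₂]
    exact (hfree _ h₂ e₂ hadj.symm).symm
  · subst e₂
    rw [Function.update_self, Function.update_of_ne e₁]
    exact hfree _ h₁ e₁ hadj
  · rw [Function.update_of_ne e₁, Function.update_of_ne e₂]
    exact hg _ (hH _ h₁ e₁) _ (hH _ h₂ e₂) hadj

theorem threeEC_deleteEdges_diff_singleton {g : Sym2 V → Fin 3}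
    (hg : IsProperEC (G.deleteEdges R) g) {u v : V} {c : Fin 3}
    (hu : IsMissing (G.deleteEdges R) g u c) (hv : IsMissing (G.deleteEdges R) g v c) :
    ThreeEC (G.deleteEdges (R \ {s(u, v)})) := by
  classical
  refine ⟨_, hg.update (fun d hd => ?_) hu hv⟩
  simp only [edgeSet_deleteEdges, Set.mem_sdiff, Set.mem_insert_iff, Set.mem_singleton_iff] at hd ⊢
  tauto

def kempeGraph (H : SimpleGraph V) (g : Sym2 V → α) (a c : α) : SimpleGraph V where
  Adj y z := H.Adj y z ∧ (g s(y, z) = a ∨ g s(y, z) = c)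
  symm := ⟨fun _ _ h => ⟨h.1.symm, Sym2.eq_swap ▸ h.2⟩⟩
  loopless := ⟨fun _ h => h.1.ne rfl⟩

theorem kempeGraph_adj_eq_or_eq (hg : IsProperEC H g) (a c : α) {y z₁ z₂ z₃ : V}
    (h₁ : (kempeGraph H g a c).Adj y z₁) (h₂ : (kempeGraph H g a c).Adj y z₂)
    (h₃ : (kempeGraph H g a c).Adj y z₃) : z₁ = z₂ ∨ z₁ = z₃ ∨ z₂ = z₃ := by
  obtain ⟨h₁, c₁⟩ := h₁
  obtain ⟨h₂, c₂⟩ := h₂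
  obtain ⟨h₃, c₃⟩ := h₃
  rcases c₁ with c₁ | c₁ <;> rcases c₂ with c₂ | c₂ <;> rcases c₃ with c₃ | c₃ <;>
    first
    | exact Or.inl (hg.eq_of_apply_eq h₁ h₂ (c₁.trans c₂.symm))
    | exact Or.inr (Or.inl (hg.eq_of_apply_eq h₁ h₃ (c₁.trans c₃.symm)))
    | exact Or.inr (Or.inr (hg.eq_of_apply_eq h₂ h₃ (c₂.trans c₃.symm)))

theorem kempeGraph_neighborSet_subsingleton (hg : IsProperEC H g) {a c : α} {y : V}
    (hy : IsMissing H g y c) : ((kempeGraph H g a c).neighborSet y).Subsingleton := by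
  rintro z₁ ⟨h₁, c₁⟩ z₂ ⟨h₂, c₂⟩
  exact hg.eq_of_apply_eq h₁ h₂
    ((c₁.resolve_right (hy z₁ h₁)).trans (c₂.resolve_right (hy z₂ h₂)).symm)

theorem exists_kempe_swap [DecidableEq α] (hg : IsProperEC H g) (a c : α) (u : V) :
    ∃ g' : Sym2 V → α, IsProperEC H g' ∧ (∀ z, g' s(u, z) = Equiv.swap a c (g s(u, z))) ∧
      ∀ y, ¬ (kempeGraph H g a c).Reachable u y → ∀ z, H.Adj y z → g' s(y, z) = g s(y, z) := by
  classical
  set K := kempeGraph H g a c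
  let g' : Sym2 V → α := fun e => if ∃ y ∈ e, K.Reachable u y then Equiv.swap a c (g e) else g e
  have hin : ∀ e, ∀ y ∈ e, K.Reachable u y → g' e = Equiv.swap a c (g e) :=
    fun e y hy hr => if_pos ⟨y, hy, hr⟩
  -- an `a`/`c`-edge leaving the component of `u` would put its other end in it as well
  have hout : ∀ y z, H.Adj y z → ¬ K.Reachable u y → g' s(y, z) = g s(y, z) := by
    intro y z hyz hy
    refine ite_eq_right_iff.2 fun ⟨w, hw, hw'⟩ => ?_
    have hz : K.Reachable u z := by
      rcases Sym2.mem_iff.1 hw with rfl | rfl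
      exacts [absurd hw' hy, hw']
    have hzy : ¬ K.Adj z y := fun h => hy (hz.trans h.reachable)
    refine Equiv.swap_apply_of_ne_of_ne ?_ ?_ <;> intro h <;>
      exact hzy ⟨hyz.symm, by simp [Sym2.eq_swap, h]⟩
  refine ⟨g', ?_, fun z => hin _ u (Sym2.mem_mk_left u z) .rfl, fun y hy z hyz => hout y z hyz hy⟩
  rintro d₁ h₁ d₂ h₂ hadj
  obtain ⟨-, y, hy₁, hy₂⟩ := id hadj
  obtain ⟨z₁, rfl⟩ := Sym2.mem_iff_exists.1 hy₁
  obtain ⟨z₂, rfl⟩ := Sym2.mem_iff_exists.1 hy₂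
  by_cases hy : K.Reachable u y
  · rw [hin _ y hy₁ hy, hin _ y hy₂ hy]
    exact (Equiv.injective _).ne (hg _ h₁ _ h₂ hadj)
  · rw [hout _ _ h₁ hy, hout _ _ h₂ hy]
    exact hg _ h₁ _ h₂ hadj

-- With all degrees at most two, two paths leaving `s` away from `t` run along each other
-- until one of them stops; it can only stop at a vertex of degree at most one.
theorem eq_of_isPath_of_adj_notMem_support
    (hdeg : ∀ y z₁ z₂ z₃, K.Adj y z₁ → K.Adj y z₂ → K.Adj y z₃ → z₁ = z₂ ∨ z₁ = z₃ ∨ z₂ = z₃)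
    {v x : V} (hv : (K.neighborSet v).Subsingleton) (hx : (K.neighborSet x).Subsingleton)
    {s t : V} (hst : K.Adj s t) (q : K.Walk s v) (p : K.Walk s x) (hq : q.IsPath)
    (hp : p.IsPath) (htq : t ∉ q.support) (htp : t ∉ p.support) : v = x := by
  induction q generalizing t with
  | nil =>
    cases p with
    | nil => rfl
    | cons h p' =>
      refine absurd ?_ htp
      rw [Walk.support_cons, hv hst h]
      exact List.mem_cons_of_mem _ p'.start_mem_support
  | cons h q' ih =>
    cases p with
    | nil =>
      refine absurd ?_ htq
      rw [Walk.support_cons, hx hst h]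
      exact List.mem_cons_of_mem _ q'.start_mem_support
    | cons h' p' =>
      obtain ⟨hq', hsq⟩ := Walk.cons_isPath_iff _ _ |>.1 hq
      obtain ⟨hp', hsp⟩ := Walk.cons_isPath_iff _ _ |>.1 hp
      rw [Walk.support_cons, List.mem_cons, not_or] at htq htp
      obtain rfl : _ := (hdeg _ _ _ _ hst h h').resolve_left
        (fun h => htq.2 (h ▸ q'.start_mem_support)) |>.resolve_left
        (fun h => htp.2 (h ▸ p'.start_mem_support))
      exact ih hv h.symm p' hq' hp' hsq hsp

theorem eq_of_reachable_of_neighborSet_subsingleton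
    (hdeg : ∀ y z₁ z₂ z₃, K.Adj y z₁ → K.Adj y z₂ → K.Adj y z₃ → z₁ = z₂ ∨ z₁ = z₃ ∨ z₂ = z₃)
    {u v x : V} (hu : (K.neighborSet u).Subsingleton) (hv : (K.neighborSet v).Subsingleton)
    (hx : (K.neighborSet x).Subsingleton) (huv : u ≠ v) (hux : u ≠ x)
    (hrv : K.Reachable u v) (hrx : K.Reachable u x) : v = x := by
  classical
  obtain ⟨q, hq⟩ := hrv.exists_isPath
  obtain ⟨p, hp⟩ := hrx.exists_isPath
  cases q with
  | nil => exact absurd rfl huv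
  | cons h q' =>
    cases p with
    | nil => exact absurd rfl hux
    | cons h' p' =>
      obtain rfl := hu h' h
      obtain ⟨hq', huq⟩ := Walk.cons_isPath_iff _ _ |>.1 hq
      obtain ⟨hp', hup⟩ := Walk.cons_isPath_iff _ _ |>.1 hp
      exact eq_of_isPath_of_adj_notMem_support hdeg hv hx h.symm q' p' hq' hp' huq hup

theorem ncard_neighborSet_deleteEdges_add_le [Finite V] {v : V} {S : Set V}
    (hS : ∀ z ∈ S, G.Adj v z ∧ s(v, z) ∈ R) :
    ((G.deleteEdges R).neighborSet v).ncard + S.ncard ≤ (G.neighborSet v).ncard := by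
  have hdisj : Disjoint ((G.deleteEdges R).neighborSet v) S :=
    Set.disjoint_left.2 fun z hz hzS => ((deleteEdges_adj ..).1 hz).2 (hS z hzS).2
  rw [← Set.ncard_union_eq hdisj]
  exact Set.ncard_le_ncard <| Set.union_subset (fun z hz => deleteEdges_le R hz)
    fun z hz => (hS z hz).1

theorem Subcubic.neighborSet_deleteEdges_subsingleton [Finite V] (hsub : Subcubic G)
    (hR : R ⊆ G.edgeSet) {v u x : V} (hux : u ≠ x) (hu : s(v, u) ∈ R) (hx : s(v, x) ∈ R) :
    ((G.deleteEdges R).neighborSet v).Subsingleton := by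
  have := ncard_neighborSet_deleteEdges_add_le (R := R) (S := {u, x}) (v := v) <| by
    rintro z (rfl | rfl)
    exacts [⟨hR hu, hu⟩, ⟨hR hx, hx⟩]
  have hdeg : (G.neighborSet v).ncard ≤ 3 := hsub v
  rw [Set.ncard_pair hux] at this
  exact Set.ncard_le_one_iff_subsingleton.1 (by omega)

theorem Subcubic.ncard_neighborSet_deleteEdges_lt [Finite V] (hsub : Subcubic G)
    (hR : R ⊆ G.edgeSet) {y v : V} (hy : s(y, v) ∈ R) :
    ((G.deleteEdges R).neighborSet y).ncard < 3 := by
  have := ncard_neighborSet_deleteEdges_add_le (R := R) (S := {v}) (v := y) <| by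
    rintro z rfl
    exact ⟨hR hy, hy⟩
  have hdeg : (G.neighborSet y).ncard ≤ 3 := hsub y
  rw [Set.ncard_singleton] at this
  omega

theorem Subcubic.not_edgesAdj_of_minimal [Finite V] (hsub : Subcubic G) (hR : R ⊆ G.edgeSet)
    (h3 : ThreeEC (G.deleteEdges R)) (hmin : ∀ e ∈ R, ¬ ThreeEC (G.deleteEdges (R \ {e}))) :
    ∀ e₁ ∈ R, ∀ e₂ ∈ R, ¬ EdgesAdj e₁ e₂ := by
  rintro e₁ he₁ e₂ he₂ ⟨hne, v, hv₁, hv₂⟩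
  obtain ⟨u, rfl⟩ := Sym2.mem_iff_exists.1 hv₁
  obtain ⟨x, rfl⟩ := Sym2.mem_iff_exists.1 hv₂
  obtain ⟨g, hg⟩ := h3
  set H := G.deleteEdges R
  have hv : (H.neighborSet v).Subsingleton :=
    hsub.neighborSet_deleteEdges_subsingleton hR (Sym2.congr_right.not.1 hne) he₁ he₂
  obtain ⟨c, hc⟩ := exists_forall_ne_isMissing g hv
  have hmissing : ∀ y, s(v, y) ∈ R → IsMissing H g y c := by
    intro y hy
    obtain ⟨β, hβ⟩ := exists_isMissing g (H := H) (v := y) <| by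
      simpa using hsub.ncard_neighborSet_deleteEdges_lt hR (Sym2.eq_swap ▸ hy)
    by_contra hyc
    exact hmin _ hy (threeEC_deleteEdges_diff_singleton hg (hc β fun h => hyc (h ▸ hβ)) hβ)
  set a := c + 1
  have hac : a ≠ c := (by decide : ∀ c : Fin 3, c + 1 ≠ c) c
  have hreach : ∀ y, s(v, y) ∈ R → (kempeGraph H g a c).Reachable y v := by
    intro y hy
    by_contra hr
    obtain ⟨g', hg', hg'y, hg'out⟩ := exists_kempe_swap hg a c y
    refine hmin _ hy (threeEC_deleteEdges_diff_singleton hg' (c := a) (fun z hz => ?_)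
      fun z hz => ?_)
    · rw [hg'out v hr z hz]
      exact hc a hac z hz
    · rw [hg'y z, Ne, Equiv.swap_apply_eq_iff, Equiv.swap_apply_left]
      exact hmissing y hy z hz
  refine hne (congrArg _ (eq_of_reachable_of_neighborSet_subsingleton
    (fun y _ _ _ => kempeGraph_adj_eq_or_eq hg a c) (hv.anti fun z hz => hz.1)
    (kempeGraph_neighborSet_subsingleton hg (hmissing u he₁))
    (kempeGraph_neighborSet_subsingleton hg (hmissing x he₂)) ?_ ?_
    (hreach u he₁).symm (hreach x he₂).symm))
  · rintro rfl
    exact (hR he₁).ne rfl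
  · rintro rfl
    exact (hR he₂).ne rfl

def conflictingEdges (G : SimpleGraph V) (f : Sym2 V → Fin 4) : Set (Sym2 V) :=
  {e | e ∈ G.edgeSet ∧ f e = 0}

theorem IsProperEC.threeEC_deleteEdges_conflictingEdges {f : Sym2 V → Fin 4}
    (hf : IsProperEC G f) : ThreeEC (G.deleteEdges (conflictingEdges G f)) := by
  have hinj : ∀ i j : Fin 4, i ≠ 0 → j ≠ 0 → Fin.predAbove 0 i = Fin.predAbove 0 j → i = j := by
    decide
  refine ⟨fun e => Fin.predAbove 0 (f e), fun d₁ h₁ d₂ h₂ hadj h => ?_⟩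
  rw [edgeSet_deleteEdges] at h₁ h₂
  exact hf _ h₁.1 _ h₂.1 hadj
    (hinj _ _ (fun h => h₁.2 ⟨h₁.1, h⟩) (fun h => h₂.2 ⟨h₂.1, h⟩) h)

theorem exists_isProperEC_conflictingEdges_eq (hR : R ⊆ G.edgeSet)
    (hmatch : ∀ e₁ ∈ R, ∀ e₂ ∈ R, ¬ EdgesAdj e₁ e₂) (h3 : ThreeEC (G.deleteEdges R)) :
    ∃ f : Sym2 V → Fin 4, IsProperEC G f ∧ conflictingEdges G f = R := by
  classical
  obtain ⟨g, hg⟩ := h3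
  refine ⟨fun e => if e ∈ R then 0 else (g e).succ, fun d₁ h₁ d₂ h₂ hadj => ?_, ?_⟩
  · by_cases r₁ : d₁ ∈ R <;> by_cases r₂ : d₂ ∈ R <;> simp only [r₁, r₂, if_true, if_false]
    · exact absurd hadj (hmatch _ r₁ _ r₂)
    · exact (Fin.succ_ne_zero _).symm
    · exact Fin.succ_ne_zero _
    · exact (Fin.succ_injective _).ne (hg _ (edgeSet_deleteEdges R ▸ ⟨h₁, r₁⟩) _
        (edgeSet_deleteEdges R ▸ ⟨h₂, r₂⟩) hadj)
  · ext e
    by_cases he : e ∈ R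
    · simp [conflictingEdges, he, hR he]
    · simp [conflictingEdges, he]

end Development

theorem stmt_6_general {V : Type*} [Fintype V] (G : SimpleGraph V)
    (hsub : Subcubic G) :
    {e | e ∈ G.edgeSet ∧ ∃ f : Sym2 V → Fin 4, IsMinimalColoring G f ∧ f e = 0}
      = ⋃₀ {R | RepConfl G R ∧ ∀ R' : Set (Sym2 V), RepConfl G R' → R.ncard ≤ R'.ncard} := by
  ext e
  simp only [Set.mem_ofPred_eq, Set.mem_sUnion, repConfl_minimal_iff]
  constructor
  · rintro ⟨heG, f, ⟨hf, hcard⟩, hfe⟩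
    exact ⟨conflictingEdges G f, ⟨fun _ h => h.1, hf.threeEC_deleteEdges_conflictingEdges, hcard⟩,
      heG, hfe⟩
  · rintro ⟨R, ⟨hR, h3, hcard⟩, heR⟩
    obtain ⟨f, hf, rfl⟩ := exists_isProperEC_conflictingEdges_eq hR
      (hsub.not_edgesAdj_of_minimal hR h3 fun _ => not_threeEC_deleteEdges_diff_singleton hcard) h3
    exact ⟨heR.1, f, ⟨hf, hcard⟩, heR.2⟩

/-- The critical subgraph of a finite subcubic class two graph equals the union of all
representative conflicting subsets of minimal order. -/
theorem stmt_6 {V : Type*} [Fintype V] (G : SimpleGraph V)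
    (hsub : Subcubic G) (hclass2 : ¬ ThreeEC G) :
    {e | e ∈ G.edgeSet ∧ ∃ f : Sym2 V → Fin 4, IsMinimalColoring G f ∧ f e = 0}
      = ⋃₀ {R | RepConfl G R ∧ ∀ R' : Set (Sym2 V), RepConfl G R' → R.ncard ≤ R'.ncard} :=
  stmt_6_general G hsub
end

section
/- Let G be a finite subcubic class two graph. Then the critical subgraph K_G of G is contained in the maximal conflicting subgraph M_G of G; that is, every edge of G that is conflicting in some minimal colouring of G belongs to some minimal conflicting subgraph of G. -/
open SimpleGraph

variable {V : Type*}

lemma threeEC_mono {V : Type*} {H K : SimpleGraph V} (h : H ≤ K) (hK : ThreeEC K) :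
    ThreeEC H := by
  obtain ⟨f, hf⟩ := hK
  exact ⟨f, fun e₁ h1 e₂ h2 hadj =>
    hf e₁ (SimpleGraph.edgeSet_mono h h1) e₂ (SimpleGraph.edgeSet_mono h h2) hadj⟩

lemma exists_minConfl {V : Type*} [Fintype V] (G : SimpleGraph V) :
    ∀ n : ℕ, ∀ H : SimpleGraph V, H.edgeSet.ncard ≤ n → H ≤ G → ¬ ThreeEC H →
      ∃ M, MinConfl G M ∧ M ≤ H := by
  intro n
  induction n with
  | zero =>
    intro H hcard hle hnc
    exfalso
    have hfin : H.edgeSet.Finite := Set.toFinite _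
    have : H.edgeSet = ∅ := by
      rw [← Set.ncard_eq_zero hfin]; omega
    exact hnc ⟨fun _ => 0, fun e₁ h1 => by simp [this] at h1⟩
  | succ n ih =>
    intro H hcard hle hnc
    by_cases hall : ∀ e ∈ H.edgeSet, ThreeEC (H.deleteEdges {e})
    · exact ⟨H, ⟨hle, hnc, hall⟩, le_refl H⟩
    · push_neg at hall
      obtain ⟨e, heH, hne⟩ := hall
      have hsub : (H.deleteEdges {e}).edgeSet = H.edgeSet \ {e} := by
        simp [SimpleGraph.edgeSet_deleteEdges]
      have hlt : (H.deleteEdges {e}).edgeSet.ncard < H.edgeSet.ncard := by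
        rw [hsub]
        exact Set.ncard_diff_singleton_lt_of_mem heH (Set.toFinite _)
      obtain ⟨M, hM, hMle⟩ := ih (H.deleteEdges {e}) (by omega)
        (le_trans (SimpleGraph.deleteEdges_le _) hle) hne
      exact ⟨M, hM, le_trans hMle (SimpleGraph.deleteEdges_le _)⟩

lemma fin4_to3 : ∀ a b : Fin 4, a ≠ 0 → b ≠ 0 → a ≠ b →
    (if a = 1 then (0 : Fin 3) else if a = 2 then 1 else 2) ≠
    (if b = 1 then (0 : Fin 3) else if b = 2 then 1 else 2) := by decide

/-- Every edge of a finite subcubic class two graph that is conflicting in some minimal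
colouring belongs to some minimal conflicting subgraph (i.e. `K_G ⊆ M_G`). -/
theorem stmt_9 {V : Type*} [Fintype V] (G : SimpleGraph V)
    (hsub : Subcubic G) (hclass2 : ¬ ThreeEC G)
    (e : Sym2 V) (he : e ∈ G.edgeSet)
    (f : Sym2 V → Fin 4) (hf : IsMinimalColoring G f) (he0 : f e = 0) :
    ∃ M : SimpleGraph V, MinConfl G M ∧ e ∈ M.edgeSet := by
  classical
  set R : Set (Sym2 V) := {e | e ∈ G.edgeSet ∧ f e = 0} with hR
  have hRfin : R.Finite := Set.toFinite _
  have heR : e ∈ R := ⟨he, he0⟩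
  -- G minus R is 3-edge-colourable
  have h3 : ThreeEC (G.deleteEdges R) := by
    refine ⟨fun e' => if f e' = 1 then 0 else if f e' = 2 then 1 else 2, ?_⟩
    intro e₁ h1 e₂ h2 hadj
    rw [SimpleGraph.edgeSet_deleteEdges] at h1 h2
    have hne1 : f e₁ ≠ 0 := fun h0 => h1.2 ⟨h1.1, h0⟩
    have hne2 : f e₂ ≠ 0 := fun h0 => h2.2 ⟨h2.1, h0⟩
    exact fin4_to3 _ _ hne1 hne2 (hf.1 e₁ h1.1 e₂ h2.1 hadj)
  -- G minus (R \ {e}) is NOT 3-edge-colourable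
  have hnot3 : ¬ ThreeEC (G.deleteEdges (R \ {e})) := by
    intro hcon
    have hmem : (R \ {e}).ncard ∈
        {n | ∃ S : Set (Sym2 V), S.ncard = n ∧ ThreeEC (G.deleteEdges S)} :=
      ⟨R \ {e}, rfl, hcon⟩
    have hle := Nat.sInf_le hmem
    have hlt : (R \ {e}).ncard < R.ncard :=
      Set.ncard_diff_singleton_lt_of_mem heR hRfin
    have : resistance G = R.ncard := hf.2.symm
    rw [resistance] at this
    omega
  obtain ⟨M, hM, hMle⟩ := exists_minConfl G (G.deleteEdges (R \ {e})).edgeSet.ncard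
    (G.deleteEdges (R \ {e})) le_rfl (SimpleGraph.deleteEdges_le _) hnot3
  refine ⟨M, hM, ?_⟩
  by_contra heM
  apply hM.2.1
  refine threeEC_mono (K := G.deleteEdges R) ?_ h3
  intro a b hab
  have h1 : (G.deleteEdges (R \ {e})).Adj a b := hMle hab
  rw [SimpleGraph.deleteEdges_adj] at h1 ⊢
  refine ⟨h1.1, fun hmem => ?_⟩
  by_cases hse : s(a, b) = e
  · exact heM (hse ▸ (M.mem_edgeSet.mpr hab))
  · exact h1.2 ⟨hmem, hse⟩
end

section
/- Let G be a finite bridgeless cubic class two graph such that M_G = G, i.e. every edge of G lies in some minimal conflicting subgraph of G. Then G consists entirely of one sparse cluster of minimal conflicting subgraphs: every minimal conflicting subgraph of G shares an edge with some other minimal conflicting subgraph of G, and the minimal conflicting subgraphs of G do not all share a common edge. -/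
open SimpleGraph

variable {V : Type*}

/- ----------------------------------------------------------------
   Auxiliary lemmas
   ---------------------------------------------------------------- -/

private lemma stmt12_edge_cases {G : SimpleGraph V} {e : Sym2 V} (he : e ∈ G.edgeSet) :
    ∃ u v, G.Adj u v ∧ e = s(u, v) :=
  Sym2.ind (f := fun z => z ∈ G.edgeSet → ∃ u v, G.Adj u v ∧ z = s(u, v))
    (fun u v h => ⟨u, v, h, rfl⟩) e he

private lemma stmt12_edgeSet_le {A B : SimpleGraph V} (h : A ≤ B) :
    A.edgeSet ⊆ B.edgeSet := by
  intro e he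
  obtain ⟨u, v, hadj, rfl⟩ := stmt12_edge_cases he
  exact (SimpleGraph.mem_edgeSet _).mpr (h hadj)

private lemma stmt12_threeEC_of_no_edges {M : SimpleGraph V} (h : M.edgeSet = ∅) :
    ThreeEC M := by
  refine ⟨fun _ => 0, ?_⟩
  intro e₁ h₁
  rw [h] at h₁
  exact absurd h₁ (Set.notMem_empty _)

private lemma stmt12_deg_eq_ncard (G : SimpleGraph V) (v : V) :
    deg G v = (G.neighborSet v).ncard := Nat.card_coe_set_eq _

private lemma stmt12_fin3_third : ∀ (d₁ d₂ : Fin 3), ∃ a, a ≠ d₁ ∧ a ≠ d₂ := by decide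

private lemma stmt12_fin3_mem : ∀ (x a b c : Fin 3),
    a ≠ b → a ≠ c → b ≠ c → x = a ∨ x = b ∨ x = c := by decide

/-- A finite set carrying a fixed-point-free involution has even cardinality. -/
private lemma stmt12_even_card_of_invol {α : Type*} [DecidableEq α] (φ : α → α) :
    ∀ (n : ℕ) (S : Finset α), S.card = n → (∀ x ∈ S, φ x ∈ S) →
      (∀ x ∈ S, φ (φ x) = x) → (∀ x ∈ S, φ x ≠ x) → Even n := by
  intro n
  induction n using Nat.strong_induction_on with
  | _ n ih =>
    intro S hcard hmap hinv hne
    rcases Nat.eq_zero_or_pos n with h0 | hpos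
    · simp [h0]
    · have hS : S.Nonempty := Finset.card_pos.mp (by omega)
      obtain ⟨x, hx⟩ := hS
      have hφx : φ x ∈ S := hmap x hx
      have hφxne : φ x ≠ x := hne x hx
      have h2 : 2 ≤ n := by
        by_contra h
        have h1 : S.card = 1 := by omega
        obtain ⟨y, hy⟩ := Finset.card_eq_one.mp h1
        rw [hy, Finset.mem_singleton] at hx hφx
        exact hφxne (hφx.trans hx.symm)
      set S' := (S.erase x).erase (φ x) with hS'
      have hφx' : φ x ∈ S.erase x := Finset.mem_erase.mpr ⟨hφxne, hφx⟩
      have hcard' : S'.card = n - 2 := by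
        rw [hS', Finset.card_erase_of_mem hφx', Finset.card_erase_of_mem hx, hcard]
        omega
      have hmem' : ∀ y ∈ S', y ∈ S ∧ y ≠ x ∧ y ≠ φ x := by
        intro y hy
        rw [hS', Finset.mem_erase, Finset.mem_erase] at hy
        exact ⟨hy.2.2, hy.2.1, hy.1⟩
      have hmap' : ∀ y ∈ S', φ y ∈ S' := by
        intro y hy
        obtain ⟨hyS, hyx, hyφx⟩ := hmem' y hy
        rw [hS', Finset.mem_erase, Finset.mem_erase]
        refine ⟨?_, ?_, hmap y hyS⟩
        · intro hcontra
          apply hyx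
          have := congrArg φ hcontra
          rwa [hinv y hyS, hinv x hx] at this
        · intro hcontra
          apply hyφx
          have := congrArg φ hcontra
          rwa [hinv y hyS] at this
      have hev : Even (n - 2) :=
        ih (n - 2) (by omega) S' hcard' hmap'
          (fun y hy => hinv y (hmem' y hy).1) (fun y hy => hne y (hmem' y hy).1)
      obtain ⟨k, hk⟩ := hev
      exact ⟨k + 1, by omega⟩

/-- Extending a proper colouring of `X − s(u,v)` by a colour missing at both `u`
and `v` yields a proper colouring of `X`. -/
private lemma stmt12_extend_coloring (X : SimpleGraph V) (u v : V) (huv : X.Adj u v)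
    (c : Sym2 V → Fin 3) (hc : IsProperEC (X.deleteEdges {s(u, v)}) c) (c₀ : Fin 3)
    (hu : ∀ x, (X.deleteEdges {s(u, v)}).Adj u x → c s(u, x) ≠ c₀)
    (hv : ∀ x, (X.deleteEdges {s(u, v)}).Adj v x → c s(v, x) ≠ c₀) : ThreeEC X := by
  classical
  have hYedge : ∀ e₁, e₁ ∈ X.edgeSet → e₁ ≠ s(u, v) →
      e₁ ∈ (X.deleteEdges {s(u, v)}).edgeSet := by
    intro e₁ h₁ hne
    rw [SimpleGraph.edgeSet_deleteEdges]
    exact ⟨h₁, by simpa using hne⟩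
  have key : ∀ z t, X.Adj z t → s(z, t) ≠ s(u, v) → (z = u ∨ z = v) →
      c s(z, t) ≠ c₀ := by
    intro z t hadj hne hz
    have hYadj : (X.deleteEdges {s(u, v)}).Adj z t := by
      rw [SimpleGraph.deleteEdges_adj]
      exact ⟨hadj, by simpa using hne⟩
    rcases hz with rfl | rfl
    · exact hu t hYadj
    · exact hv t hYadj
  refine ⟨fun z => if z = s(u, v) then c₀ else c z, ?_⟩
  intro e₁ h₁ e₂ h₂ hadj
  obtain ⟨hne, z, hz1, hz2⟩ := hadj
  by_cases h₁e : e₁ = s(u, v)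
  · have h₂e : e₂ ≠ s(u, v) := fun h => hne (h₁e.trans h.symm)
    simp only [if_pos h₁e, if_neg h₂e]
    have hzuv : z = u ∨ z = v := by
      rw [h₁e] at hz1
      simpa [Sym2.mem_iff] using hz1
    obtain ⟨t, rfl⟩ := Sym2.mem_iff_exists.mp hz2
    have hXadj : X.Adj z t := (SimpleGraph.mem_edgeSet _).mp h₂
    exact (key z t hXadj (by rw [← h₁e]; exact hne.symm) hzuv).symm
  · by_cases h₂e : e₂ = s(u, v)
    · simp only [if_neg h₁e, if_pos h₂e]
      have hzuv : z = u ∨ z = v := by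
        rw [h₂e] at hz2
        simpa [Sym2.mem_iff] using hz2
      obtain ⟨t, rfl⟩ := Sym2.mem_iff_exists.mp hz1
      have hXadj : X.Adj z t := (SimpleGraph.mem_edgeSet _).mp h₁
      exact key z t hXadj (by rw [← h₂e]; exact hne) hzuv
    · simp only [if_neg h₁e, if_neg h₂e]
      exact hc e₁ (hYedge e₁ h₁ h₁e) e₂ (hYedge e₂ h₂ h₂e) ⟨hne, z, hz1, hz2⟩

/-- Parity lemma: in a graph all of whose vertices have degree `0` or `3` which is
not 3-edge-colourable, deleting a single edge leaves a non-3-edge-colourable graph. -/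
private lemma stmt12_lemmaP [Fintype V] (X : SimpleGraph V)
    (hd : ∀ v, deg X v = 0 ∨ deg X v = 3) (hnc : ¬ ThreeEC X)
    {e : Sym2 V} (he : e ∈ X.edgeSet) : ¬ ThreeEC (X.deleteEdges {e}) := by
  classical
  obtain ⟨u, v, huv, rfl⟩ := stmt12_edge_cases he
  rintro ⟨c, hc⟩
  set Y := X.deleteEdges {s(u, v)} with hY
  have hYadj : ∀ w x, Y.Adj w x ↔ X.Adj w x ∧ s(w, x) ≠ s(u, v) := by
    intro w x
    rw [hY, SimpleGraph.deleteEdges_adj]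
    simp
  have hdeg3 : ∀ w x, X.Adj w x → (X.neighborSet w).ncard = 3 := by
    intro w x hadj
    rcases hd w with h0 | h3
    · exfalso
      rw [stmt12_deg_eq_ncard] at h0
      have hempty : X.neighborSet w = ∅ := (Set.ncard_eq_zero (Set.toFinite _)).mp h0
      have hxmem : x ∈ X.neighborSet w := hadj
      rw [hempty] at hxmem
      exact Set.notMem_empty x hxmem
    · rw [stmt12_deg_eq_ncard] at h3
      exact h3
  have uniq : ∀ z x x', Y.Adj z x → Y.Adj z x' → c s(z, x) = c s(z, x') → x = x' := by
    intro z x x' h1 h2 hcol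
    by_contra hne
    have hEne : s(z, x) ≠ s(z, x') := fun h => hne (Sym2.congr_right.mp h)
    exact hc _ ((SimpleGraph.mem_edgeSet _).mpr h1) _ ((SimpleGraph.mem_edgeSet _).mpr h2)
      ⟨hEne, z, Sym2.mem_mk_left z x, Sym2.mem_mk_left z x'⟩ hcol
  -- vertices distinct from u,v with a neighbour see all three colours
  have hsee : ∀ w, w ≠ u → w ≠ v → (∃ x, X.Adj w x) →
      ∀ col : Fin 3, ∃ x, Y.Adj w x ∧ c s(w, x) = col := by
    rintro w hwu hwv ⟨x0, hx0⟩ col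
    have h3 : (X.neighborSet w).ncard = 3 := hdeg3 w x0 hx0
    obtain ⟨x₁, x₂, x₃, h12, h13, h23, hset⟩ := Set.ncard_eq_three.mp h3
    have hmem : ∀ i, i ∈ X.neighborSet w → Y.Adj w i := by
      intro i hi
      refine (hYadj w i).mpr ⟨hi, ?_⟩
      intro hcontra
      rcases Sym2.eq_iff.mp hcontra with ⟨h1', _⟩ | ⟨h1', _⟩
      · exact hwu h1'
      · exact hwv h1'
    have hY1 : Y.Adj w x₁ := hmem x₁ (by rw [hset]; simp)
    have hY2 : Y.Adj w x₂ := hmem x₂ (by rw [hset]; simp)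
    have hY3 : Y.Adj w x₃ := hmem x₃ (by rw [hset]; simp)
    have hc12 : c s(w, x₁) ≠ c s(w, x₂) := fun h => h12 (uniq w x₁ x₂ hY1 hY2 h)
    have hc13 : c s(w, x₁) ≠ c s(w, x₃) := fun h => h13 (uniq w x₁ x₃ hY1 hY3 h)
    have hc23 : c s(w, x₂) ≠ c s(w, x₃) := fun h => h23 (uniq w x₂ x₃ hY2 hY3 h)
    rcases stmt12_fin3_mem col _ _ _ hc12 hc13 hc23 with h | h | h
    · exact ⟨x₁, hY1, h.symm⟩
    · exact ⟨x₂, hY2, h.symm⟩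
    · exact ⟨x₃, hY3, h.symm⟩
  -- each endpoint of the removed edge misses exactly one colour
  have hend : ∀ p q, X.Adj p q → s(p, q) = s(u, v) →
      ∃ a : Fin 3, (∀ x, Y.Adj p x → c s(p, x) ≠ a) ∧
        (∀ col : Fin 3, col ≠ a → ∃ x, Y.Adj p x ∧ c s(p, x) = col) := by
    intro p q hpq hpq_uv
    have h3 : (X.neighborSet p).ncard = 3 := hdeg3 p q hpq
    have hYnbr : Y.neighborSet p = X.neighborSet p \ {q} := by
      ext x
      simp only [SimpleGraph.mem_neighborSet, Set.mem_diff, Set.mem_singleton_iff]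
      rw [hYadj]
      constructor
      · rintro ⟨h1, h2⟩
        refine ⟨h1, ?_⟩
        rintro rfl
        exact h2 hpq_uv
      · rintro ⟨h1, h2⟩
        refine ⟨h1, ?_⟩
        intro hcon
        apply h2
        have hpp : s(p, x) = s(p, q) := by rw [hcon, hpq_uv]
        exact Sym2.congr_right.mp hpp
    have h2card : (Y.neighborSet p).ncard = 2 := by
      have hqmem : q ∈ X.neighborSet p := (X.mem_neighborSet p q).mpr hpq
      rw [hYnbr, Set.ncard_diff_singleton_of_mem hqmem, h3]
    obtain ⟨y₁, y₂, hy12, hyset⟩ := Set.ncard_eq_two.mp h2card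
    have hYp1 : Y.Adj p y₁ := by
      have : y₁ ∈ Y.neighborSet p := by rw [hyset]; simp
      exact this
    have hYp2 : Y.Adj p y₂ := by
      have : y₂ ∈ Y.neighborSet p := by rw [hyset]; simp
      exact this
    have hd12 : c s(p, y₁) ≠ c s(p, y₂) := fun h => hy12 (uniq p y₁ y₂ hYp1 hYp2 h)
    obtain ⟨a, ha1, ha2⟩ := stmt12_fin3_third (c s(p, y₁)) (c s(p, y₂))
    refine ⟨a, ?_, ?_⟩
    · intro x hx
      have hxmem : x ∈ Y.neighborSet p := hx
      rw [hyset] at hxmem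
      simp only [Set.mem_insert_iff, Set.mem_singleton_iff] at hxmem
      rcases hxmem with rfl | rfl
      · exact ha1.symm
      · exact ha2.symm
    · intro col hcol
      rcases stmt12_fin3_mem col a (c s(p, y₁)) (c s(p, y₂)) ha1 ha2 hd12 with h | h | h
      · exact absurd h hcol
      · exact ⟨y₁, hYp1, h.symm⟩
      · exact ⟨y₂, hYp2, h.symm⟩
  obtain ⟨a, hua_miss, hua_sees⟩ := hend u v huv rfl
  obtain ⟨b, hvb_miss, hvb_sees⟩ := hend v u huv.symm Sym2.eq_swap
  by_cases hab : a = b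
  · subst hab
    exact hnc (stmt12_extend_coloring X u v huv c hc a hua_miss hvb_miss)
  · -- parity contradiction
    obtain ⟨c₀, hc₀a, hc₀b⟩ := stmt12_fin3_third a b
    -- choice functions for coloured neighbours
    have mkφ : ∀ col : Fin 3, ∃ φ : V → V, ∀ w, (∃ x, Y.Adj w x ∧ c s(w, x) = col) →
        Y.Adj w (φ w) ∧ c s(w, φ w) = col := by
      intro col
      refine ⟨fun w => if h : ∃ x, Y.Adj w x ∧ c s(w, x) = col then h.choose else w, ?_⟩
      intro w hw
      simp only [dif_pos hw]
      exact hw.choose_spec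
    set S₀ : Finset V := Finset.univ.filter (fun w => ∃ x, X.Adj w x) with hS₀
    have hmemS₀ : ∀ w, w ∈ S₀ ↔ ∃ x, X.Adj w x := by
      intro w
      rw [hS₀, Finset.mem_filter]
      simp
    have hYtoX : ∀ w x, Y.Adj w x → X.Adj w x := fun w x h => ((hYadj w x).mp h).1
    -- generic construction: given a colour col such that every vertex of S sees col,
    -- we get an involution; we use it twice.
    have pairing : ∀ (col : Fin 3) (S : Finset V), S ⊆ S₀ →
        (∀ w ∈ S, ∃ x, Y.Adj w x ∧ c s(w, x) = col) →
        (∀ w ∈ S, ∀ x, Y.Adj w x → c s(w, x) = col → x ∈ S) →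
        Even S.card := by
      intro col S hSsub hSsees hSclosed
      obtain ⟨φ, hφ⟩ := mkφ col
      refine stmt12_even_card_of_invol φ S.card S rfl ?_ ?_ ?_
      · intro w hw
        obtain ⟨h1, h2⟩ := hφ w (hSsees w hw)
        exact hSclosed w hw (φ w) h1 h2
      · intro w hw
        obtain ⟨h1, h2⟩ := hφ w (hSsees w hw)
        have hex : ∃ x, Y.Adj (φ w) x ∧ c s(φ w, x) = col := by
          refine ⟨w, h1.symm, ?_⟩
          rw [Sym2.eq_swap]
          exact h2
        obtain ⟨h3, h4⟩ := hφ (φ w) hex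
        refine uniq (φ w) (φ (φ w)) w h3 h1.symm ?_
        rw [h4, Sym2.eq_swap]
        exact h2.symm
      · intro w hw
        obtain ⟨h1, _⟩ := hφ w (hSsees w hw)
        exact fun h => (h1.ne) h.symm
    -- S₀ is even via colour c₀
    have hS₀sees : ∀ w ∈ S₀, ∃ x, Y.Adj w x ∧ c s(w, x) = c₀ := by
      intro w hw
      have hwex := (hmemS₀ w).mp hw
      by_cases hwu : w = u
      · subst hwu
        exact hua_sees c₀ hc₀a
      · by_cases hwv : w = v
        · subst hwv
          exact hvb_sees c₀ hc₀b
        · exact hsee w hwu hwv hwex c₀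
    have hS₀closed : ∀ w ∈ S₀, ∀ x, Y.Adj w x → c s(w, x) = c₀ → x ∈ S₀ := by
      intro w _ x hx _
      rw [hmemS₀]
      exact ⟨w, (hYtoX w x hx).symm⟩
    have hEven₀ : Even S₀.card := pairing c₀ S₀ (fun _ h => h) hS₀sees hS₀closed
    -- S₀ \ {u} is even via colour a
    have huS₀ : u ∈ S₀ := (hmemS₀ u).mpr ⟨v, huv⟩
    have hvS₀ : v ∈ S₀ := (hmemS₀ v).mpr ⟨u, huv.symm⟩
    have hS₁sees : ∀ w ∈ S₀.erase u, ∃ x, Y.Adj w x ∧ c s(w, x) = a := by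
      intro w hw
      rw [Finset.mem_erase] at hw
      obtain ⟨hwu, hwS₀⟩ := hw
      have hwex := (hmemS₀ w).mp hwS₀
      by_cases hwv : w = v
      · subst hwv
        exact hvb_sees a hab
      · exact hsee w hwu hwv hwex a
    have hS₁closed : ∀ w ∈ S₀.erase u, ∀ x, Y.Adj w x → c s(w, x) = a →
        x ∈ S₀.erase u := by
      intro w _ x hx hcol
      rw [Finset.mem_erase]
      constructor
      · rintro rfl
        apply hua_miss w hx.symm
        rw [Sym2.eq_swap]
        exact hcol
      · rw [hmemS₀]
        exact ⟨w, (hYtoX w x hx).symm⟩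
    have hEven₁ : Even (S₀.erase u).card :=
      pairing a (S₀.erase u) (Finset.erase_subset _ _) hS₁sees hS₁closed
    have hcard_erase : (S₀.erase u).card = S₀.card - 1 := Finset.card_erase_of_mem huS₀
    have hpos : 0 < S₀.card := Finset.card_pos.mpr ⟨u, huS₀⟩
    obtain ⟨k1, hk1⟩ := hEven₀
    obtain ⟨k2, hk2⟩ := hEven₁
    omega

/-- Every non-3-edge-colourable graph contains a minimal conflicting subgraph. -/
private lemma stmt12_exists_mcs [Fintype V] :
    ∀ (n : ℕ) (X : SimpleGraph V), X.edgeSet.ncard ≤ n → ¬ ThreeEC X →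
      ∃ N : SimpleGraph V, N ≤ X ∧ ¬ ThreeEC N ∧
        ∀ e ∈ N.edgeSet, ThreeEC (N.deleteEdges {e}) := by
  intro n
  induction n with
  | zero =>
    intro X hcard hX
    exfalso
    apply hX
    apply stmt12_threeEC_of_no_edges
    exact (Set.ncard_eq_zero (Set.toFinite _)).mp (Nat.le_zero.mp hcard)
  | succ n ih =>
    intro X hcard hX
    by_cases h : ∀ e ∈ X.edgeSet, ThreeEC (X.deleteEdges {e})
    · exact ⟨X, le_refl X, hX, h⟩
    · push_neg at h
      obtain ⟨e, he, hne⟩ := h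
      have hlt : (X.deleteEdges {e}).edgeSet.ncard ≤ n := by
        rw [SimpleGraph.edgeSet_deleteEdges,
          Set.ncard_diff_singleton_of_mem he]
        omega
      obtain ⟨N, hN1, hN2, hN3⟩ := ih (X.deleteEdges {e}) hlt hne
      exact ⟨N, le_trans hN1 (SimpleGraph.deleteEdges_le _), hN2, hN3⟩

/-- A minimal conflicting subgraph of a subcubic graph has no vertex of degree one. -/
private lemma stmt12_deg_ne_one [Fintype V] {M : SimpleGraph V}
    (hsub : ∀ w, deg M w ≤ 3) (hnc : ¬ ThreeEC M)
    (hmin : ∀ e ∈ M.edgeSet, ThreeEC (M.deleteEdges {e})) (u : V) : deg M u ≠ 1 := by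
  classical
  intro h1
  rw [stmt12_deg_eq_ncard] at h1
  obtain ⟨v, hv⟩ := Set.ncard_eq_one.mp h1
  have huv : M.Adj u v := by
    have : v ∈ M.neighborSet u := by rw [hv]; simp
    exact this
  obtain ⟨c, hc⟩ := hmin s(u, v) ((SimpleGraph.mem_edgeSet _).mpr huv)
  set Y := M.deleteEdges {s(u, v)} with hYdef
  -- colours present at v
  have hfin : (Y.neighborSet v).Finite := Set.toFinite _
  set T : Finset (Fin 3) := hfin.toFinset.image (fun x => c s(v, x)) with hT
  have hsubset : Y.neighborSet v ⊆ M.neighborSet v \ {u} := by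
    intro x hx
    have hx' : Y.Adj v x := hx
    rw [hYdef, SimpleGraph.deleteEdges_adj] at hx'
    refine ⟨hx'.1, ?_⟩
    intro hxu
    apply hx'.2
    simp only [Set.mem_singleton_iff] at hxu
    subst hxu
    simp [Sym2.eq_swap]
  have humem : u ∈ M.neighborSet v := (M.mem_neighborSet v u).mpr huv.symm
  have hcard2 : (M.neighborSet v \ {u}).ncard ≤ 2 := by
    rw [Set.ncard_diff_singleton_of_mem humem]
    have h3 : (M.neighborSet v).ncard ≤ 3 := by
      rw [← stmt12_deg_eq_ncard]
      exact hsub v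
    omega
  have hTcard : T.card ≤ 2 := by
    calc T.card ≤ hfin.toFinset.card := Finset.card_image_le
    _ = (Y.neighborSet v).ncard := (Set.ncard_eq_toFinset_card _ hfin).symm
    _ ≤ (M.neighborSet v \ {u}).ncard := Set.ncard_le_ncard hsubset (Set.toFinite _)
    _ ≤ 2 := hcard2
  obtain ⟨c₀, hc₀⟩ : ∃ c₀ : Fin 3, c₀ ∉ T := by
    by_contra hcon
    push_neg at hcon
    have hsub' : (Finset.univ : Finset (Fin 3)) ⊆ T := fun x _ => hcon x
    have := Finset.card_le_card hsub'
    rw [Finset.card_univ] at this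
    simp only [Fintype.card_fin] at this
    omega
  apply hnc
  refine stmt12_extend_coloring M u v huv c hc c₀ ?_ ?_
  · intro x hx
    exfalso
    have hx' : (M.deleteEdges {s(u, v)}).Adj u x := hx
    rw [SimpleGraph.deleteEdges_adj] at hx'
    have hxmem : x ∈ M.neighborSet u := hx'.1
    rw [hv] at hxmem
    simp only [Set.mem_singleton_iff] at hxmem
    subst hxmem
    exact hx'.2 rfl
  · intro x hx hcol
    apply hc₀
    rw [hT, ← hcol]
    simp only [Finset.mem_image]
    exact ⟨x, by rw [Set.Finite.mem_toFinset]; exact hx, rfl⟩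

/-- If every edge of a finite bridgeless cubic class two graph lies in some minimal
conflicting subgraph, then the graph consists entirely of one sparse cluster of minimal
conflicting subgraphs: each minimal conflicting subgraph shares an edge with another one,
and no edge lies in all of them. -/
theorem stmt_12 {V : Type*} [Fintype V] (G : SimpleGraph V)
    (hcubic : CubicGraph G) (hbridgeless : ∀ e ∈ G.edgeSet, ¬ G.IsBridge e)
    (hclass2 : ¬ ThreeEC G)
    (hMG : ∀ e ∈ G.edgeSet, ∃ M : SimpleGraph V, MinConfl G M ∧ e ∈ M.edgeSet) :
    (∀ M : SimpleGraph V, MinConfl G M →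
      ∃ M' : SimpleGraph V, MinConfl G M' ∧ M' ≠ M ∧ (M.edgeSet ∩ M'.edgeSet).Nonempty) ∧
    ¬ ∃ e : Sym2 V, ∀ M : SimpleGraph V, MinConfl G M → e ∈ M.edgeSet := by
  classical
  have hGdeg : ∀ v, deg G v = 3 := hcubic
  have hsubcubic : ∀ (A : SimpleGraph V), A ≤ G → ∀ w, deg A w ≤ 3 := by
    intro A hA w
    rw [stmt12_deg_eq_ncard]
    have h1 : (A.neighborSet w).ncard ≤ (G.neighborSet w).ncard :=
      Set.ncard_le_ncard (fun x hx => hA hx) (Set.toFinite _)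
    have h2 : (G.neighborSet w).ncard = 3 := by
      rw [← stmt12_deg_eq_ncard]
      exact hGdeg w
    omega
  have hMCS_exists : ∀ (X : SimpleGraph V), X ≤ G → ¬ ThreeEC X →
      ∃ N, MinConfl G N ∧ N ≤ X := by
    intro X hXG hX
    obtain ⟨N, h1, h2, h3⟩ := stmt12_exists_mcs X.edgeSet.ncard X le_rfl hX
    exact ⟨N, ⟨le_trans h1 hXG, h2, h3⟩, h1⟩
  constructor
  · -- every minimal conflicting subgraph shares an edge with another one
    intro M hM
    by_contra hno
    push_neg at hno
    obtain ⟨hMle, hMnc, hMmin⟩ := hM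
    have hMsub : ∀ w, deg M w ≤ 3 := hsubcubic M hMle
    have hMedge : M.edgeSet.Nonempty := by
      rcases Set.eq_empty_or_nonempty M.edgeSet with h | h
      · exact absurd (stmt12_threeEC_of_no_edges h) hMnc
      · exact h
    -- M has a vertex of degree 2
    obtain ⟨u₀, hu₀⟩ : ∃ u₀, deg M u₀ = 2 := by
      by_cases hall : ∀ w, deg M w = 0 ∨ deg M w = 3
      · obtain ⟨e₀, he₀⟩ := hMedge
        exact absurd (hMmin e₀ he₀) (stmt12_lemmaP M hall hMnc he₀)
      · push_neg at hall
        obtain ⟨u₀, h0, h3⟩ := hall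
        have h1 := stmt12_deg_ne_one hMsub hMnc hMmin u₀
        have h4 := hMsub u₀
        exact ⟨u₀, by omega⟩
    -- find the third edge at u₀, which is not in M
    have hGnbr : (G.neighborSet u₀).ncard = 3 := by
      rw [← stmt12_deg_eq_ncard]; exact hGdeg u₀
    have hMnbr : (M.neighborSet u₀).ncard = 2 := by
      rw [← stmt12_deg_eq_ncard]; exact hu₀
    have hsubnbr : M.neighborSet u₀ ⊆ G.neighborSet u₀ := fun x hx => hMle hx
    obtain ⟨w₀, hw₀G, hw₀M⟩ : ∃ w₀, w₀ ∈ G.neighborSet u₀ ∧ w₀ ∉ M.neighborSet u₀ := by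
      by_contra hcon
      push_neg at hcon
      have hsub' : G.neighborSet u₀ ⊆ M.neighborSet u₀ := fun x hx => hcon x hx
      have := Set.ncard_le_ncard hsub' (Set.toFinite _)
      omega
    have hGadj : G.Adj u₀ w₀ := hw₀G
    obtain ⟨N₀, hN₀, hfN₀⟩ := hMG s(u₀, w₀) ((SimpleGraph.mem_edgeSet _).mpr hGadj)
    have hN₀adj : N₀.Adj u₀ w₀ := (SimpleGraph.mem_edgeSet _).mp hfN₀
    have hN₀M : N₀ ≠ M := by
      intro h
      rw [h] at hN₀adj
      exact hw₀M hN₀adj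
    have hdisj := hno N₀ hN₀ hN₀M
    -- N₀ has degree one at u₀
    have hnbrN₀ : N₀.neighborSet u₀ = {w₀} := by
      apply Set.eq_of_subset_of_subset
      · intro x hx
        have hxadj : N₀.Adj u₀ x := hx
        by_cases hxM : x ∈ M.neighborSet u₀
        · exfalso
          have hxe : s(u₀, x) ∈ M.edgeSet ∩ N₀.edgeSet :=
            ⟨(SimpleGraph.mem_edgeSet _).mpr hxM, (SimpleGraph.mem_edgeSet _).mpr hxadj⟩
          rw [hdisj] at hxe
          exact hxe
        · by_contra hxw
          simp only [Set.mem_singleton_iff] at hxw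
          have hxG : x ∈ G.neighborSet u₀ := hN₀.1 hxadj
          have hsubset4 : insert x (insert w₀ (M.neighborSet u₀)) ⊆ G.neighborSet u₀ := by
            intro z hz
            simp only [Set.mem_insert_iff] at hz
            rcases hz with rfl | rfl | hz
            · exact hxG
            · exact hw₀G
            · exact hsubnbr hz
          have hc4 : (insert x (insert w₀ (M.neighborSet u₀))).ncard = 4 := by
            rw [Set.ncard_insert_of_notMem
                (by simp [Set.mem_insert_iff, hxw, hxM]) (Set.toFinite _),
              Set.ncard_insert_of_notMem hw₀M (Set.toFinite _), hMnbr]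
          have := Set.ncard_le_ncard hsubset4 (Set.toFinite _)
          omega
      · intro x hx
        simp only [Set.mem_singleton_iff] at hx
        subst hx
        exact hN₀adj
    have hdegN₀ : deg N₀ u₀ = 1 := by
      rw [stmt12_deg_eq_ncard, hnbrN₀, Set.ncard_singleton]
    exact stmt12_deg_ne_one (hsubcubic N₀ hN₀.1) hN₀.2.1 hN₀.2.2 u₀ hdegN₀
  · -- no edge lies in every minimal conflicting subgraph
    rintro ⟨e, he_all⟩
    obtain ⟨N₁, hN₁, _⟩ := hMCS_exists G le_rfl hclass2
    have heG : e ∈ G.edgeSet := stmt12_edgeSet_le hN₁.1 (he_all N₁ hN₁)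
    have h3EC : ThreeEC (G.deleteEdges {e}) := by
      by_contra h
      obtain ⟨N, hN, hNle⟩ := hMCS_exists (G.deleteEdges {e})
        (SimpleGraph.deleteEdges_le _) h
      have hmem := stmt12_edgeSet_le hNle (he_all N hN)
      rw [SimpleGraph.edgeSet_deleteEdges] at hmem
      exact hmem.2 rfl
    have hall : ∀ v, deg G v = 0 ∨ deg G v = 3 := fun v => Or.inr (hGdeg v)
    exact stmt12_lemmaP G hall hclass2 heG h3EC
end
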